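/- Let g be holomorphic on the upper half-plane ℍ with Im(g(z)) ≥ 0 for all z ∈ ℍ, and suppose there exist constants C > 0 and δ > 0 such that |g(z)| ≤ C·|z|² for all z ∈ ℍ with |z| < δ. Then g(z) = 0 for every z ∈ ℍ. -/

import Mathlib

open Complex ComplexConjugate Metric Set Filter Topology Asymptotics

/-!
Transporting the Schwarz lemma through the Cayley maps `z ↦ (z - c) / (z - conj c)` gives
the Schwarz–Pick inequality `Im z Im c |h z - conj (h c)|² ≤ Im (h z) Im (h c) |z - conj c|²`
for a holomorphic `h : ℍ → ℍ`. If moreover `|h (i t)| ≤ K t` for small `t > 0`, putting `z = i t`,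
dividing by `t` and letting `t → 0` gives Julia's inequality `Im c |h c|² ≤ K Im (h c) |c|²`.
For `h = g + ε z` the quadratic decay of `g` allows `K = 2 ε`, and letting `ε → 0` leaves
`Im c |g c|² ≤ 0`.
-/

namespace Complex

theorem normSq_sub_conj (w p : ℂ) :
    normSq (w - conj p) = normSq (w - p) + 4 * w.im * p.im := by
  simp only [normSq_apply, sub_re, sub_im, conj_re, conj_im]; ring

theorem sub_conj_ne_zero {w p : ℂ} (hw : 0 < w.im) (hp : 0 ≤ p.im) : w - conj p ≠ 0 := by
  intro h
  have := congrArg im h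
  simp only [sub_im, conj_im, zero_im] at this
  linarith

noncomputable def cayleyAt (c z : ℂ) : ℂ := (z - c) / (z - conj c)

noncomputable def cayleyAtInv (c u : ℂ) : ℂ := (c - conj c * u) / (1 - u)

theorem cayleyAt_self (c : ℂ) : cayleyAt c c = 0 := by simp [cayleyAt]

theorem cayleyAtInv_zero (c : ℂ) : cayleyAtInv c 0 = c := by simp [cayleyAtInv]

theorem cayleyAtInv_cayleyAt {c z : ℂ} (hc : 0 < c.im) (hz : 0 < z.im) :
    cayleyAtInv c (cayleyAt c z) = z := by
  have hzc := sub_conj_ne_zero hz hc.le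
  have hcc := sub_conj_ne_zero hc hc.le
  have h1 : 1 - cayleyAt c z = (c - conj c) / (z - conj c) := by
    rw [cayleyAt]; field_simp; ring
  rw [cayleyAtInv, h1, cayleyAt]
  field_simp
  ring

theorem norm_cayleyAt_lt_one {c z : ℂ} (hc : 0 < c.im) (hz : 0 < z.im) :
    ‖cayleyAt c z‖ < 1 := by
  rw [cayleyAt, norm_div, div_lt_one (norm_pos_iff.mpr (sub_conj_ne_zero hz hc.le)),
    ← sq_lt_sq₀ (norm_nonneg _) (norm_nonneg _), Complex.sq_norm, Complex.sq_norm,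
    normSq_sub_conj]
  nlinarith

theorem im_cayleyAtInv_pos {c u : ℂ} (hc : 0 < c.im) (hu : ‖u‖ < 1) :
    0 < (cayleyAtInv c u).im := by
  have hu1 : 1 - u ≠ 0 := sub_ne_zero.mpr fun h => by simp [← h] at hu
  have hnu : u.re * u.re + u.im * u.im < 1 := by
    rw [← normSq_apply, ← Complex.sq_norm]; nlinarith [norm_nonneg u]
  rw [cayleyAtInv, div_im, div_sub_div_same]
  refine div_pos ?_ (normSq_pos.mpr hu1)
  have key : (c - conj c * u).im * (1 - u).re - (c - conj c * u).re * (1 - u).im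
      = c.im * (1 - (u.re * u.re + u.im * u.im)) := by
    simp only [sub_re, sub_im, mul_re, mul_im, conj_re, conj_im, one_re, one_im]; ring
  rw [key]
  exact mul_pos hc (by linarith)

theorem one_sub_norm_cayleyAt_sq {c z : ℂ} (hc : 0 < c.im) (hz : 0 < z.im) :
    1 - ‖cayleyAt c z‖ ^ 2 = 4 * z.im * c.im / normSq (z - conj c) := by
  have hN : normSq (z - conj c) ≠ 0 := (normSq_pos.mpr (sub_conj_ne_zero hz hc.le)).ne'
  rw [cayleyAt, norm_div, div_pow, Complex.sq_norm, Complex.sq_norm, one_sub_div hN]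
  congr 1
  rw [normSq_sub_conj]
  ring

theorem norm_cayleyAt_map_le {h : ℂ → ℂ} (hd : DifferentiableOn ℂ h {z | 0 < z.im})
    (hpos : ∀ z, 0 < z.im → 0 < (h z).im) {c z : ℂ} (hc : 0 < c.im) (hz : 0 < z.im) :
    ‖cayleyAt (h c) (h z)‖ ≤ ‖cayleyAt c z‖ := by
  have hopen : IsOpen {z : ℂ | 0 < z.im} := isOpen_lt continuous_const continuous_im
  set F : ℂ → ℂ := fun u => cayleyAt (h c) (h (cayleyAtInv c u))
  have hF_maps : MapsTo F (ball 0 1) (ball 0 1) := fun u hu => by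
    rw [mem_ball_zero_iff] at hu ⊢
    exact norm_cayleyAt_lt_one (hpos c hc) (hpos _ (im_cayleyAtInv_pos hc hu))
  have hF_diff : DifferentiableOn ℂ F (ball 0 1) := fun u hu => by
    rw [mem_ball_zero_iff] at hu
    have hu1 : 1 - u ≠ 0 := sub_ne_zero.mpr fun h => by simp [← h] at hu
    have him := im_cayleyAtInv_pos hc hu
    have hinv : DifferentiableAt ℂ (cayleyAtInv c) u :=
      ((differentiableAt_const _).sub ((differentiableAt_const _).mul differentiableAt_id)).div
        ((differentiableAt_const _).sub differentiableAt_id) hu1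
    have hh : DifferentiableAt ℂ (fun u => h (cayleyAtInv c u)) u :=
      (hd.differentiableAt (hopen.mem_nhds him)).comp u hinv
    exact ((hh.sub_const _).div (hh.sub_const _)
      (sub_conj_ne_zero (hpos _ him) (hpos c hc).le)).differentiableWithinAt
  have hF_zero : F 0 = 0 := by simp only [F, cayleyAtInv_zero, cayleyAt_self]
  simpa only [F, cayleyAtInv_cayleyAt hc hz] using
    norm_le_norm_of_mapsTo_ball hF_diff (hF_maps.mono_right ball_subset_closedBall) hF_zero
      (norm_cayleyAt_lt_one hc hz)

theorem im_mul_im_mul_normSq_sub_conj_le {h : ℂ → ℂ}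
    (hd : DifferentiableOn ℂ h {z | 0 < z.im}) (hpos : ∀ z, 0 < z.im → 0 < (h z).im)
    {c z : ℂ} (hc : 0 < c.im) (hz : 0 < z.im) :
    z.im * c.im * normSq (h z - conj (h c)) ≤ (h z).im * (h c).im * normSq (z - conj c) := by
  have hle := pow_le_pow_left₀ (norm_nonneg _) (norm_cayleyAt_map_le hd hpos hc hz) 2
  have key : 4 * z.im * c.im / normSq (z - conj c) ≤
      4 * (h z).im * (h c).im / normSq (h z - conj (h c)) := by
    rw [← one_sub_norm_cayleyAt_sq hc hz, ← one_sub_norm_cayleyAt_sq (hpos c hc) (hpos z hz)]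
    linarith
  rw [div_le_div_iff₀ (normSq_pos.mpr (sub_conj_ne_zero hz hc.le))
    (normSq_pos.mpr (sub_conj_ne_zero (hpos z hz) (hpos c hc).le))] at key
  linarith

theorem im_mul_normSq_le_of_norm_le_on_imagAxis {h : ℂ → ℂ}
    (hd : DifferentiableOn ℂ h {z | 0 < z.im}) (hpos : ∀ z, 0 < z.im → 0 < (h z).im) {K : ℝ}
    (hK : ∀ᶠ t : ℝ in 𝓝[>] 0, ‖h (I * t)‖ ≤ K * t) {c : ℂ} (hc : 0 < c.im) :
    c.im * normSq (h c) ≤ K * (h c).im * normSq c := by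
  have hlim : Tendsto (fun t : ℝ => h (I * t)) (𝓝[>] 0) (𝓝 0) := by
    refine squeeze_zero_norm' hK ?_
    exact (continuous_const_mul K).tendsto' 0 0 (mul_zero K) |>.mono_left nhdsWithin_le_nhds
  have hev : ∀ᶠ t : ℝ in 𝓝[>] 0, c.im * normSq (h (I * t) - conj (h c)) ≤
      K * (h c).im * normSq (I * t - conj c) := by
    filter_upwards [hK, self_mem_nhdsWithin] with t hKt (ht : 0 < t)
    have hit : (I * t).im = t := by simp
    have hSP := im_mul_im_mul_normSq_sub_conj_le hd hpos hc (z := I * t) (by rwa [hit])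
    rw [hit] at hSP
    have him_le : (h (I * t)).im ≤ K * t := (im_le_norm _).trans hKt
    have := mul_le_mul_of_nonneg_right him_le
      (mul_nonneg (hpos c hc).le (normSq_nonneg (I * t - conj c)))
    refine le_of_mul_le_mul_left ?_ ht
    linarith
  have hL : Tendsto (fun t : ℝ => c.im * normSq (h (I * t) - conj (h c))) (𝓝[>] 0)
      (𝓝 (c.im * normSq (h c))) := by
    have hcont : Continuous fun w : ℂ => c.im * normSq (w - conj (h c)) := by fun_prop
    simpa [Function.comp_def] using hcont.tendsto 0 |>.comp hlim
  have hR : Tendsto (fun t : ℝ => K * (h c).im * normSq (I * t - conj c)) (𝓝[>] 0)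
      (𝓝 (K * (h c).im * normSq c)) := by
    have hcont : Continuous fun t : ℝ => K * (h c).im * normSq (I * t - conj c) := by fun_prop
    simpa using hcont.tendsto 0 |>.mono_left nhdsWithin_le_nhds
  exact le_of_tendsto_of_tendsto hL hR hev

theorem eq_zero_of_isLittleO_on_imagAxis {g : ℂ → ℂ}
    (hg : DifferentiableOn ℂ g {z | 0 < z.im}) (hmap : ∀ z, 0 < z.im → 0 ≤ (g z).im)
    (hlo : (fun t : ℝ => g (I * t)) =o[𝓝[>] 0] fun t => t) {c : ℂ} (hc : 0 < c.im) :
    g c = 0 := by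
  have key : ∀ ε ∈ Ioi (0 : ℝ),
      c.im * normSq (g c + ε * c) ≤ 2 * ε * (g c + ε * c).im * normSq c := by
    intro ε (hε : 0 < ε)
    refine im_mul_normSq_le_of_norm_le_on_imagAxis (h := fun z => g z + ε * z)
      (hg.add (differentiableOn_id.const_mul _)) (fun z hz => ?_) ?_ hc
    · simpa using add_pos_of_nonneg_of_pos (hmap z hz) (mul_pos hε hz)
    filter_upwards [hlo.bound hε, self_mem_nhdsWithin] with t hgt (ht : 0 < t)
    calc ‖g (I * t) + ε * (I * t)‖ ≤ ‖g (I * t)‖ + ε * t := by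
          simpa [abs_of_pos ht, abs_of_pos hε] using norm_add_le (g (I * t)) (ε * (I * t))
      _ ≤ 2 * ε * t := by rw [Real.norm_of_nonneg ht.le] at hgt; linarith
  have hzero : c.im * normSq (g c) ≤ 0 := by
    simpa using le_on_closure key (by fun_prop) (by fun_prop)
      (by simp [closure_Ioi] : (0 : ℝ) ∈ closure (Ioi 0))
  exact normSq_eq_zero.mp ((nonpos_of_mul_nonpos_right hzero hc).antisymm (normSq_nonneg _))

end Complex

theorem vanishing_of_quadratic_decay_general
    (g : ℂ → ℂ) (hg : DifferentiableOn ℂ g {z : ℂ | 0 < z.im})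
    (hmap : ∀ z : ℂ, 0 < z.im → 0 ≤ (g z).im)
    (C : ℝ) (δ : ℝ) (hδ : 0 < δ)
    (hbound : ∀ z : ℂ, 0 < z.im → ‖z‖ < δ → ‖g z‖ ≤ C * ‖z‖ ^ 2) :
    ∀ z : ℂ, 0 < z.im → g z = 0 := by
  intro z hz
  refine eq_zero_of_isLittleO_on_imagAxis hg hmap ?_ hz
  have hO : (fun t : ℝ => g (I * t)) =O[𝓝[>] 0] fun t => t ^ 2 := by
    refine IsBigO.of_bound C ?_
    filter_upwards [self_mem_nhdsWithin, nhdsWithin_le_nhds (eventually_lt_nhds hδ)]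
      with t (ht : 0 < t) htδ
    have hnorm : ‖I * t‖ = t := by simp [abs_of_pos ht]
    simpa [hnorm] using hbound (I * t) (by simpa using ht) (by rwa [hnorm])
  exact hO.trans_isLittleO ((isLittleO_pow_id one_lt_two).mono nhdsWithin_le_nhds)

/-- A holomorphic function on the upper half-plane with nonnegative imaginary part
that is `O(z²)` as `z → 0` vanishes identically. -/
theorem vanishing_of_quadratic_decay
    (g : ℂ → ℂ) (hg : DifferentiableOn ℂ g {z : ℂ | 0 < z.im})
    (hmap : ∀ z : ℂ, 0 < z.im → 0 ≤ (g z).im)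
    (C : ℝ) (hC : 0 < C) (δ : ℝ) (hδ : 0 < δ)
    (hbound : ∀ z : ℂ, 0 < z.im → ‖z‖ < δ → ‖g z‖ ≤ C * ‖z‖ ^ 2) :
    ∀ z : ℂ, 0 < z.im → g z = 0 :=
  vanishing_of_quadratic_decay_general g hg hmap C δ hδ hbound
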